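/- Let n ≥ 2, m ≥ 1 an integer, α_i > 0, β_i > 0 for 1 ≤ i ≤ n, with β_1 = min_{1≤i≤n} β_i. Set A = ∑_{i=1}^{n} α_i, γ_l = (1/l) ∑_{i=1}^{n} α_i (1 − β_1/β_i)^l for l ≥ 1, and define δ_0 = 1, δ_{j+1} = (1/(j+1)) ∑_{l=1}^{j+1} l γ_l δ_{j+1−l} for j ≥ 0. Then ∏_{i=1}^{n} (β_1/β_i)^{α_i} · β_1^m · ∑_{j=0}^{∞} δ_j · Γ(A+j+m)/Γ(A+j) = ∑_{i_1 + ⋯ + i_n = m} (m!/(i_1! ⋯ i_n!)) · ∏_{k=1}^{n} (Γ(α_k + i_k)/Γ(α_k)) β_k^{i_k}, where the right sum ranges over all n-tuples of nonnegative integers summing to m, and the series on the left converges. -/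

import Mathlib

/-!
Put `cᵢ = 1 - β₁/βᵢ ∈ [0, 1)` and write `⟨x⟩ₛ` for the rising factorial. The recurrence for `δ`
is the logarithmic-derivative recurrence of `∏ᵢ (1 - cᵢX)^(-αᵢ)`, so `δⱼ` is its `j`-th
coefficient, `∑_{|k| = j} ∏ᵢ (⟨αᵢ⟩_{kᵢ}/kᵢ!) cᵢ^{kᵢ}`; and `Γ(A+j+m)/Γ(A+j) = ⟨A+j⟩ₘ`.
Expanding `⟨∑ᵢ (αᵢ + kᵢ)⟩ₘ` by the multinomial Vandermonde identity and summing each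
coordinate `kᵢ` separately with the negative binomial series
`∑ₛ (⟨a⟩ₛ/s!) cˢ ⟨a+s⟩_f = ⟨a⟩_f (1-c)^(-(a+f))` gives the multinomial sum, with
`(1 - cᵢ)^(-(αᵢ+fᵢ)) = (βᵢ/β₁)^(αᵢ+fᵢ)`. All terms are nonnegative, so the rearrangements
are legitimate.
-/

open Finset Real PowerSeries
open scoped Nat

theorem Real.Gamma_add_nat_div_Gamma {x : ℝ} (hx : 0 < x) (s : ℕ) :
    Gamma (x + s) / Gamma x = (ascPochhammer ℝ s).eval x := by
  induction s with
  | zero => simp [(Gamma_pos_of_pos hx).ne']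
  | succ s ih =>
    rw [Nat.cast_succ, ← add_assoc, Gamma_add_one (by positivity), mul_div_assoc, ih,
      ascPochhammer_succ_right, Polynomial.eval_mul]
    simp [mul_comm]

theorem Ring.multichoose_eq_ascPochhammer_div (a : ℝ) (s : ℕ) :
    Ring.multichoose a s = (ascPochhammer ℝ s).eval a / s ! := by
  rw [eq_div_iff (by positivity), mul_comm, ← nsmul_eq_mul,
    Ring.factorial_nsmul_multichoose_eq_ascPochhammer, Polynomial.ascPochhammer_smeval_eq_eval]

theorem Ring.multichoose_pos {a : ℝ} (ha : 0 < a) (s : ℕ) : 0 < Ring.multichoose a s := by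
  rw [Ring.multichoose_eq_ascPochhammer_div]
  exact div_pos (ascPochhammer_pos s a ha) (by positivity)

theorem ascPochhammer_eval_mul_eval_add (a : ℝ) (s f : ℕ) :
    (ascPochhammer ℝ s).eval a * (ascPochhammer ℝ f).eval (a + s) =
      (ascPochhammer ℝ (s + f)).eval a := by
  simpa [Polynomial.eval_comp] using congrArg (Polynomial.eval a) (ascPochhammer_mul ℝ s f)

theorem Ring.multichoose_mul_ascPochhammer_eval_add (a : ℝ) (s f : ℕ) :
    Ring.multichoose a s * (ascPochhammer ℝ f).eval (a + s) =
      (ascPochhammer ℝ f).eval a * Ring.multichoose (a + f) s := by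
  rw [Ring.multichoose_eq_ascPochhammer_div, Ring.multichoose_eq_ascPochhammer_div,
    div_mul_eq_mul_div, ascPochhammer_eval_mul_eval_add, add_comm,
    ← ascPochhammer_eval_mul_eval_add, mul_div_assoc]

theorem Ring.succ_mul_multichoose_succ (a : ℝ) (s : ℕ) :
    (s + 1) * Ring.multichoose a (s + 1) = (a + s) * Ring.multichoose a s := by
  rw [Ring.multichoose_eq_ascPochhammer_div, Ring.multichoose_eq_ascPochhammer_div,
    ascPochhammer_succ_right, Polynomial.eval_mul, Nat.factorial_succ]
  push_cast
  field_simp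
  simp [mul_comm]

theorem sum_Icc_one_succ_eq_sum_antidiagonal {M : Type*} [AddCommMonoid M] (f : ℕ → ℕ → M)
    (k : ℕ) : ∑ l ∈ Icc 1 (k + 1), f l (k + 1 - l) = ∑ p ∈ antidiagonal k, f (p.1 + 1) p.2 := by
  rw [Nat.sum_antidiagonal_eq_sum_range_succ (fun p q => f (p + 1) q), range_eq_Ico,
    ← Ico_add_one_right_eq_Icc, ← sum_Ico_add' _ 0 (k + 1) 1]
  simp [Nat.add_sub_add_right]

theorem coeff_prod_eq_sum_antidiagonalTuple {R : Type*} [CommSemiring R] {n : ℕ}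
    (f : Fin n → R⟦X⟧) (d : ℕ) :
    coeff d (∏ i, f i) = ∑ k ∈ Finset.Nat.antidiagonalTuple n d, ∏ i, coeff (k i) (f i) := by
  rw [coeff_prod, ← piAntidiag_univ_fin_eq_antidiagonalTuple, finsuppAntidiag, sum_map]
  exact sum_attach _ fun k : Fin n → ℕ => ∏ i, coeff (k i) (f i)

theorem one_sub_C_mul_X_mul_rescale_mk_one {R : Type*} [CommRing R] (c : R) :
    (1 - C c * X) * rescale c (mk 1) = 1 := by
  have h := congrArg (rescale c) (mk_one_mul_one_sub_eq_one R)
  rwa [map_mul, map_sub, map_one, rescale_X, mul_comm] at h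

/-- `(1 - c X) ^ (-a)` as a formal power series. -/
noncomputable def negBinomialSeries (a c : ℝ) : ℝ⟦X⟧ :=
  mk fun s => Ring.multichoose a s * c ^ s

@[simp]
theorem coeff_negBinomialSeries (a c : ℝ) (s : ℕ) :
    coeff s (negBinomialSeries a c) = Ring.multichoose a s * c ^ s :=
  coeff_mk _ _

@[simp]
theorem constantCoeff_negBinomialSeries (a c : ℝ) : constantCoeff (negBinomialSeries a c) = 1 := by
  simp [← coeff_zero_eq_constantCoeff_apply]

theorem negBinomialSeries_eq_rescale (a c : ℝ) :
    negBinomialSeries a c = rescale (-c) (binomialSeries ℝ (-a)) := by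
  ext s
  rw [coeff_negBinomialSeries, coeff_rescale, binomialSeries_coeff, Ring.choose_neg',
    Units.smul_def, zsmul_eq_mul, Int.cast_negOnePow_natCast, smul_eq_mul, mul_one,
    ← mul_assoc, ← mul_pow, neg_mul_neg, mul_one, mul_comm]

theorem negBinomialSeries_add (a b c : ℝ) :
    negBinomialSeries (a + b) c = negBinomialSeries a c * negBinomialSeries b c := by
  simp only [negBinomialSeries_eq_rescale, neg_add, binomialSeries_add, map_mul]

theorem negBinomialSeries_sum {ι : Type*} (s : Finset ι) (a : ι → ℝ) (c : ℝ) :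
    negBinomialSeries (∑ i ∈ s, a i) c = ∏ i ∈ s, negBinomialSeries (a i) c := by
  classical
  induction s using Finset.induction_on with
  | empty => simp [negBinomialSeries_eq_rescale]
  | insert i s hi ih => rw [sum_insert hi, prod_insert hi, negBinomialSeries_add, ih]

theorem Ring.multichoose_sum {n : ℕ} (x : Fin n → ℝ) (m : ℕ) :
    Ring.multichoose (∑ i, x i) m =
      ∑ f ∈ Finset.Nat.antidiagonalTuple n m, ∏ i, Ring.multichoose (x i) (f i) := by
  simpa [coeff_prod_eq_sum_antidiagonalTuple] using
    congrArg (coeff m) (negBinomialSeries_sum univ x 1)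

theorem ascPochhammer_eval_sum {n : ℕ} (x : Fin n → ℝ) (m : ℕ) :
    (ascPochhammer ℝ m).eval (∑ i, x i) =
      ∑ f ∈ Finset.Nat.antidiagonalTuple n m,
        (Nat.multinomial univ f : ℝ) * ∏ i, (ascPochhammer ℝ (f i)).eval (x i) := by
  have h := Ring.multichoose_sum x m
  rw [Ring.multichoose_eq_ascPochhammer_div, div_eq_iff (by positivity)] at h
  rw [h, sum_mul]
  refine sum_congr rfl fun f hf => ?_
  rw [Finset.Nat.mem_antidiagonalTuple] at hf
  have hspec : (∏ i, ((f i)! : ℝ)) * Nat.multinomial univ f = m ! := by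
    exact_mod_cast hf ▸ Nat.multinomial_spec univ f
  simp only [Ring.multichoose_eq_ascPochhammer_div, prod_div_distrib, ← hspec]
  field_simp

theorem one_sub_C_mul_X_mul_derivative_negBinomialSeries (a c : ℝ) :
    (1 - C c * X) * d⁄dX ℝ (negBinomialSeries a c) = C (a * c) * negBinomialSeries a c := by
  ext (_ | k) <;>
    simp only [sub_mul, one_mul, map_sub, mul_assoc, coeff_C_mul, coeff_zero_X_mul,
      coeff_succ_X_mul, coeff_derivative, coeff_negBinomialSeries]
  · simp
  · have h := Ring.succ_mul_multichoose_succ a (k + 1)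
    push_cast at h ⊢
    linear_combination c ^ (k + 2) * h

theorem derivative_negBinomialSeries (a c : ℝ) :
    d⁄dX ℝ (negBinomialSeries a c) = C (a * c) * rescale c (mk 1) * negBinomialSeries a c := by
  calc d⁄dX ℝ (negBinomialSeries a c)
      = rescale c (mk 1) * ((1 - C c * X) * d⁄dX ℝ (negBinomialSeries a c)) := by
        rw [← mul_assoc, mul_comm (rescale c (mk 1)), one_sub_C_mul_X_mul_rescale_mk_one, one_mul]
    _ = C (a * c) * rescale c (mk 1) * negBinomialSeries a c := by
        rw [one_sub_C_mul_X_mul_derivative_negBinomialSeries]; ring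

theorem derivative_prod_negBinomialSeries {ι : Type*} (s : Finset ι) (a c : ι → ℝ) :
    d⁄dX ℝ (∏ i ∈ s, negBinomialSeries (a i) (c i)) =
      (∑ i ∈ s, C (a i * c i) * rescale (c i) (mk 1)) * ∏ i ∈ s, negBinomialSeries (a i) (c i) := by
  classical
  induction s using Finset.induction_on with
  | empty => simp
  | insert i s hi ih =>
    rw [prod_insert hi, sum_insert hi, Derivation.leibniz, ih, derivative_negBinomialSeries,
      smul_eq_mul, smul_eq_mul]
    ring

theorem succ_mul_coeff_succ_prod_negBinomialSeries {ι : Type*} (s : Finset ι) (a c : ι → ℝ)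
    (k : ℕ) :
    (k + 1) * coeff (k + 1) (∏ i ∈ s, negBinomialSeries (a i) (c i)) =
      ∑ l ∈ Icc 1 (k + 1), (∑ i ∈ s, a i * c i ^ l) *
        coeff (k + 1 - l) (∏ i ∈ s, negBinomialSeries (a i) (c i)) := by
  rw [sum_Icc_one_succ_eq_sum_antidiagonal
    (fun l q => (∑ i ∈ s, a i * c i ^ l) * coeff q (∏ i ∈ s, negBinomialSeries (a i) (c i))),
    mul_comm,
    ← coeff_derivative, derivative_prod_negBinomialSeries, coeff_mul]
  refine sum_congr rfl fun p _ => ?_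
  simp [map_sum, coeff_C_mul, coeff_rescale, pow_succ, mul_assoc, mul_comm (c _)]

theorem eq_coeff_prod_negBinomialSeries {ι : Type*} (s : Finset ι) (a c : ι → ℝ) {δ : ℕ → ℝ}
    (h0 : δ 0 = 1)
    (hrec : ∀ k : ℕ, (k + 1) * δ (k + 1) =
      ∑ l ∈ Icc 1 (k + 1), (∑ i ∈ s, a i * c i ^ l) * δ (k + 1 - l))
    (j : ℕ) : δ j = coeff j (∏ i ∈ s, negBinomialSeries (a i) (c i)) := by
  induction j using Nat.strong_induction_on with
  | _ j ih =>
    rcases j with _ | k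
    · simp [h0, coeff_zero_eq_constantCoeff_apply, map_prod]
    · refine mul_left_cancel₀ (by positivity : (k + 1 : ℝ) ≠ 0) ?_
      rw [hrec, succ_mul_coeff_succ_prod_negBinomialSeries]
      refine sum_congr rfl fun l hl => ?_
      rw [ih _ (by grind)]

theorem hasSum_multichoose_mul_pow {a c : ℝ} (hc : |c| < 1) :
    HasSum (fun s => Ring.multichoose a s * c ^ s) ((1 - c) ^ (-a)) := by
  have h := (one_div_one_sub_rpow_hasFPowerSeriesOnBall_zero a).hasSum (y := c)
    (by simpa [Real.enorm_eq_ofReal_abs] using hc)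
  simp only [FormalMultilinearSeries.ofScalars_apply_eq, zero_add, smul_eq_mul,
    ← Ring.multichoose_eq] at h
  rwa [one_div, ← rpow_neg (by linarith [abs_lt.1 hc])] at h

theorem hasSum_multichoose_mul_pow_mul_ascPochhammer {a c : ℝ} (hc : |c| < 1) (f : ℕ) :
    HasSum (fun s => Ring.multichoose a s * c ^ s * (ascPochhammer ℝ f).eval (a + s))
      ((ascPochhammer ℝ f).eval a * (1 - c) ^ (-(a + f))) := by
  have h := (hasSum_multichoose_mul_pow (a := a + f) hc).mul_left ((ascPochhammer ℝ f).eval a)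
  simp only [← mul_assoc, ← Ring.multichoose_mul_ascPochhammer_eval_add] at h
  simpa only [mul_right_comm _ (c ^ _)] using h

theorem hasSum_pi_prod_of_nonneg {κ : Type*} {n : ℕ} {g : Fin n → κ → ℝ} {S : Fin n → ℝ}
    (hg : ∀ i, HasSum (g i) (S i)) (hg0 : ∀ i k, 0 ≤ g i k) :
    HasSum (fun k : Fin n → κ => ∏ i, g i (k i)) (∏ i, S i) := by
  induction n with
  | zero => simp
  | succ n ih =>
    have htail :
        HasSum (fun k : Fin n → κ => ∏ i : Fin n, g i.succ (k i)) (∏ i : Fin n, S i.succ) :=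
      ih (fun i => hg i.succ) (fun i => hg0 i.succ)
    have htail0 : 0 ≤ fun k : Fin n → κ => ∏ i : Fin n, g i.succ (k i) :=
      fun k => prod_nonneg fun i _ => hg0 i.succ (k i)
    have hsummable := (hg 0).summable.mul_of_nonneg htail.summable (hg0 0) htail0
    have hprod := (hg 0).mul htail hsummable
    rw [← (Fin.consEquiv fun _ => κ).hasSum_iff]
    simpa [Function.comp_def, Fin.prod_univ_succ] using hprod

theorem HasSum.sum_antidiagonalTuple {n : ℕ} {F : (Fin n → ℕ) → ℝ} {T : ℝ} (h : HasSum F T) :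
    HasSum (fun j => ∑ k ∈ Finset.Nat.antidiagonalTuple n j, F k) T := by
  rw [← (Finset.Nat.sigmaAntidiagonalTupleEquivTuple n).hasSum_iff] at h
  refine h.sigma fun j => ?_
  have h := hasSum_fintype fun k : Finset.Nat.antidiagonalTuple n j => F k
  rwa [sum_coe_sort] at h

theorem hasSum_coeff_prod_negBinomialSeries_mul_ascPochhammer {n : ℕ} {a c : Fin n → ℝ}
    (ha : ∀ i, 0 < a i) (hc0 : ∀ i, 0 ≤ c i) (hc1 : ∀ i, c i < 1) (m : ℕ) :
    HasSum (fun j : ℕ => coeff j (∏ i, negBinomialSeries (a i) (c i)) *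
        (ascPochhammer ℝ m).eval (∑ i, a i + j))
      (∑ f ∈ Finset.Nat.antidiagonalTuple n m, (Nat.multinomial univ f : ℝ) *
        ∏ i, (ascPochhammer ℝ (f i)).eval (a i) * (1 - c i) ^ (-(a i + f i))) := by
  have hsum_f (f : Fin n → ℕ) := hasSum_pi_prod_of_nonneg
    (fun i => hasSum_multichoose_mul_pow_mul_ascPochhammer
      (abs_lt.2 ⟨by linarith [hc0 i], hc1 i⟩) (f i))
    (fun i s => by
      have := ha i
      have := Ring.multichoose_pos this s
      have := ascPochhammer_pos (f i) (a i + s) (by positivity)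
      have := hc0 i
      positivity)
  have hsum := hasSum_sum fun f (_ : f ∈ Finset.Nat.antidiagonalTuple n m) =>
    (hsum_f f).mul_left (Nat.multinomial univ f : ℝ)
  convert hsum.sum_antidiagonalTuple using 2 with j
  rw [coeff_prod_eq_sum_antidiagonalTuple, sum_mul]
  refine sum_congr rfl fun k hk => ?_
  have hsplit : ∑ i, a i + (j : ℝ) = ∑ i, (a i + k i) := by
    rw [sum_add_distrib, ← Finset.Nat.mem_antidiagonalTuple.1 hk, Nat.cast_sum]
  simp only [coeff_negBinomialSeries, hsplit, ascPochhammer_eval_sum, mul_sum, prod_mul_distrib]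
  exact sum_congr rfl fun f _ => by ring

theorem div_rpow_mul_pow_mul_div_rpow_neg {b₁ b : ℝ} (hb₁ : 0 < b₁) (hb : 0 < b) (a : ℝ) (f : ℕ) :
    (b₁ / b) ^ a * b₁ ^ f * (b₁ / b) ^ (-(a + f)) = b ^ f := by
  rw [mul_right_comm, ← rpow_add (by positivity), neg_add, add_neg_cancel_left,
    rpow_neg (by positivity), rpow_natCast, div_pow]
  field_simp

theorem prod_div_rpow_mul_pow_mul_prod_ascPochhammer {n : ℕ} {α β : Fin n → ℝ} {b₁ : ℝ}
    (hα : ∀ i, 0 < α i) (hβ : ∀ i, 0 < β i) (hb₁ : 0 < b₁) (f : Fin n → ℕ) :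
    (∏ i, (b₁ / β i) ^ α i) * b₁ ^ (∑ i, f i) *
        ∏ i, (ascPochhammer ℝ (f i)).eval (α i) * (b₁ / β i) ^ (-(α i + f i)) =
      ∏ i, Gamma (α i + f i) / Gamma (α i) * β i ^ f i := by
  rw [← prod_pow_eq_pow_sum, ← prod_mul_distrib, ← prod_mul_distrib]
  refine prod_congr rfl fun i _ => ?_
  rw [Gamma_add_nat_div_Gamma (hα i), ← div_rpow_mul_pow_mul_div_rpow_neg hb₁ (hβ i) (α i) (f i)]
  ring

/-- For `n ≥ 2`, an integer `m ≥ 1`, `αᵢ > 0`, `βᵢ > 0` with `β₁ = min βᵢ`,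
setting `A = ∑ αᵢ`, `γₗ = (1/l) ∑ᵢ αᵢ (1 - β₁/βᵢ)^l`, `δ₀ = 1` and
`δ_{j+1} = (1/(j+1)) ∑_{l=1}^{j+1} l γₗ δ_{j+1-l}`, the series
`∑ⱼ δⱼ Γ(A+j+m)/Γ(A+j)` converges and
`∏ᵢ (β₁/βᵢ)^{αᵢ} · β₁^m · ∑_{j=0}^∞ δⱼ Γ(A+j+m)/Γ(A+j)` equals the multinomial
sum `∑_{i₁+⋯+iₙ=m} (m!/(i₁!⋯iₙ!)) ∏ₖ (Γ(αₖ+iₖ)/Γ(αₖ)) βₖ^{iₖ}`. -/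
theorem gamma_sum_moment_identity
    (n : ℕ) (hn : 2 ≤ n) (m : ℕ) (α β : Fin n → ℝ)
    (hα : ∀ i, 0 < α i) (hβ : ∀ i, 0 < β i)
    (β1 : ℝ) (hβ1 : β1 = β ⟨0, by omega⟩) (hmin : ∀ i, β1 ≤ β i)
    (A : ℝ) (hA : A = ∑ i : Fin n, α i)
    (γ δ : ℕ → ℝ)
    (hγ : ∀ l : ℕ, 1 ≤ l →
      γ l = (∑ i : Fin n, α i * (1 - β1 / β i) ^ l) / l)
    (hδ0 : δ 0 = 1)
    (hδ : ∀ j : ℕ, δ (j + 1) =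
      (1 / (j + 1 : ℝ)) * ∑ l ∈ Finset.Icc 1 (j + 1), (l : ℝ) * γ l * δ (j + 1 - l)) :
    Summable (fun j : ℕ => δ j * (Real.Gamma (A + j + m) / Real.Gamma (A + j))) ∧
      (∏ i : Fin n, (β1 / β i) ^ (α i)) * β1 ^ (m : ℕ) *
          (∑' j : ℕ, δ j * (Real.Gamma (A + j + m) / Real.Gamma (A + j))) =
        ∑ f ∈ Finset.Nat.antidiagonalTuple n m,
          (Nat.multinomial Finset.univ f : ℝ) *
            ∏ k : Fin n, (Real.Gamma (α k + f k) / Real.Gamma (α k)) * β k ^ f k := by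
  have hβ1pos : 0 < β1 := hβ1 ▸ hβ _
  set c : Fin n → ℝ := fun i => 1 - β1 / β i with hc
  have hc0 (i : Fin n) : 0 ≤ c i := sub_nonneg.2 ((div_le_one (hβ i)).2 (hmin i))
  have hc1 (i : Fin n) : c i < 1 := sub_lt_self _ (div_pos hβ1pos (hβ i))
  have hδc : ∀ j, δ j = coeff j (∏ i, negBinomialSeries (α i) (c i)) := by
    refine eq_coeff_prod_negBinomialSeries univ α c hδ0 fun k => ?_
    rw [hδ k, ← mul_assoc, mul_one_div_cancel (by positivity), one_mul]
    refine sum_congr rfl fun l hl => ?_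
    have hl1 : 1 ≤ l := (mem_Icc.1 hl).1
    rw [hγ l hl1, mul_div_cancel₀ _ (Nat.cast_ne_zero.2 (by omega))]
  have hA0 : 0 < A := hA ▸ sum_pos (fun i _ => hα i) ⟨⟨0, by omega⟩, mem_univ _⟩
  have hGamma (j : ℕ) :
      Gamma (A + j + m) / Gamma (A + j) = (ascPochhammer ℝ m).eval (∑ i, α i + j) :=
    hA ▸ Gamma_add_nat_div_Gamma (by positivity) m
  have hsum := hasSum_coeff_prod_negBinomialSeries_mul_ascPochhammer hα hc0 hc1 m
  simp only [← hδc, ← hGamma] at hsum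
  refine ⟨hsum.summable, ?_⟩
  rw [hsum.tsum_eq, mul_sum]
  refine sum_congr rfl fun f hf => ?_
  rw [← prod_div_rpow_mul_pow_mul_prod_ascPochhammer hα hβ hβ1pos f,
    Finset.Nat.mem_antidiagonalTuple.1 hf]
  simp only [hc, sub_sub_cancel]
  ring
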